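/- arXiv:1410.6075 — 6 statements merged into one kernel-verified Lean document; each statement's English description precedes it below -/
import Mathlib

section
/- Let f : [i, i+1] → ℝⁿ and g : [j, j+1] → ℝⁿ be affine (linear interpolation) segments in a normed space, and δ ≥ 0. Then the free space Free_δ(f,g) = {(ρ_f, ρ_g) ∈ [i,i+1] × [j,j+1] : ‖f(ρ_f) − g(ρ_g)‖ ≤ δ} is a convex subset of ℝ². -/
/-! On the rectangle `[i, i+1] × [j, j+1]` the map `(s, t) ↦ f s - g t` agrees with an affine
map, so the free space is the rectangle intersected with the preimage of the closed
`δ`-ball under an affine map, and both are convex. -/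

open Set

theorem Convex.sep_mem_of_eqOn_affineMap {𝕜 E F : Type*} [Ring 𝕜] [PartialOrder 𝕜]
    [AddCommGroup E] [Module 𝕜 E] [AddCommGroup F] [Module 𝕜 F]
    {s : Set E} {t : Set F} (hs : Convex 𝕜 s) (ht : Convex 𝕜 t)
    (φ : E →ᵃ[𝕜] F) {h : E → F} (hφ : EqOn h φ s) :
    Convex 𝕜 {x | x ∈ s ∧ h x ∈ t} := by
  have hset : {x | x ∈ s ∧ h x ∈ t} = s ∩ φ ⁻¹' t := by
    ext x
    exact and_congr_right fun hx => by rw [mem_preimage, hφ hx]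
  rw [hset]
  exact hs.inter (ht.affine_preimage φ)

theorem eqOn_lineMap_sub_of_interpolates {V : Type*} [AddCommGroup V] [Module ℝ V]
    {i : ℝ} {a b : V} {f : ℝ → V}
    (hf : ∀ lam ∈ Icc (0:ℝ) 1, f (i + lam) = (1 - lam) • a + lam • b) :
    EqOn f (fun x => AffineMap.lineMap a b (x - i)) (Icc i (i + 1)) := by
  intro x hx
  have hlam : x - i ∈ Icc (0:ℝ) 1 := ⟨by linarith [hx.1], by linarith [hx.2]⟩
  simpa [AffineMap.lineMap_apply_module] using hf (x - i) hlam

/-- The free space of two affine segments is convex, for any norm. -/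
theorem free_space_convex {V : Type*} [NormedAddCommGroup V] [NormedSpace ℝ V]
    (i j δ : ℝ) (fi fi1 gj gj1 : V)
    (f g : ℝ → V)
    (hf : ∀ lam ∈ Icc (0:ℝ) 1, f (i + lam) = (1 - lam) • fi + lam • fi1)
    (hg : ∀ lam ∈ Icc (0:ℝ) 1, g (j + lam) = (1 - lam) • gj + lam • gj1) :
    Convex ℝ {p : ℝ × ℝ |
      p.1 ∈ Icc i (i + 1) ∧ p.2 ∈ Icc j (j + 1) ∧ ‖f p.1 - g p.2‖ ≤ δ} := by
  let φ : ℝ × ℝ →ᵃ[ℝ] V :=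
    (AffineMap.lineMap fi fi1).comp (AffineMap.fst - AffineMap.const ℝ _ i) -
      (AffineMap.lineMap gj gj1).comp (AffineMap.snd - AffineMap.const ℝ _ j)
  have hφ : EqOn (fun p : ℝ × ℝ => f p.1 - g p.2) φ (Icc i (i + 1) ×ˢ Icc j (j + 1)) := by
    rintro ⟨s, t⟩ ⟨hs, ht⟩
    simp [φ, eqOn_lineMap_sub_of_interpolates hf hs, eqOn_lineMap_sub_of_interpolates hg ht]
  have hset : {p : ℝ × ℝ | p.1 ∈ Icc i (i + 1) ∧ p.2 ∈ Icc j (j + 1) ∧ ‖f p.1 - g p.2‖ ≤ δ} =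
      {p | p ∈ Icc i (i + 1) ×ˢ Icc j (j + 1) ∧ f p.1 - g p.2 ∈ Metric.closedBall 0 δ} := by
    ext p
    simp only [mem_ofPred_eq, mem_prod, mem_closedBall_zero_iff, and_assoc]
  rw [hset]
  exact ((convex_Icc _ _).prod (convex_Icc _ _)).sep_mem_of_eqOn_affineMap
    (convex_closedBall 0 δ) φ hφ
end

section
/- The Skorokhod distance between two continuous traces equals the Fréchet distance between their graph curves: for continuous traces x : [a,b] → O and y : [c,d] → O into a real normed vector space O, define C_x(ρ) = (x(ρ), ρ) ∈ O × ℝ with the norm ‖(o,t)‖ = max(‖o‖, |t|), and similarly C_y. Then inf over retimings r of max(sup_t |r(t)−t|, sup_t ‖x(t) − y(r(t))‖) equals inf over pairs of strictly increasing continuous surjections α_f : [0,1] → [a,b], α_g : [0,1] → [c,d] of sup_{θ} ‖C_x(α_f(θ)) − C_y(α_g(θ))‖. -/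
/-!
A retiming `r` and a pair of reparameterizations `(αf, αg)` correspond to each other through
`αg = r ∘ αf`: given `r`, take `αf` affine and `αg = r ∘ αf`; given `(αf, αg)`, take
`r = αg ∘ αf⁻¹`, which is continuous because `αf` is a continuous bijection out of a compact
interval. Under this correspondence the two costs agree pointwise, because on a compact
parameter interval the supremum of `max (value gap) (time gap)` is the maximum of the two
suprema.
-/

open Set Function

theorem csSup_image_sup {α β : Type*} [ConditionallyCompleteLattice α] {f g : β → α}
    {s : Set β} (hf : BddAbove (f '' s)) (hg : BddAbove (g '' s)) :
    sSup ((fun t => f t ⊔ g t) '' s) = sSup (f '' s) ⊔ sSup (g '' s) := by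
  simp only [image_eq_range] at hf hg ⊢
  exact ciSup_sup_eq hf hg

theorem Set.BijOn.continuousOn_invFunOn {X Y : Type*} [TopologicalSpace X] [TopologicalSpace Y]
    [T2Space Y] [Nonempty X] {f : X → Y} {s : Set X} {t : Set Y} (hs : IsCompact s)
    (hf : ContinuousOn f s) (h : BijOn f s t) : ContinuousOn (invFunOn f s) t := by
  have hinv := h.invOn_invFunOn
  have hmaps : MapsTo (invFunOn f s) t s := (h.symm hinv.symm).mapsTo
  rw [continuousOn_iff_isClosed]
  intro C hC
  refine ⟨f '' (s ∩ C), ((hs.inter_right hC).image_of_continuousOn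
    (hf.mono inter_subset_left)).isClosed, ?_⟩
  ext y
  constructor
  · rintro ⟨hyC, hyt⟩
    exact ⟨⟨_, ⟨hmaps hyt, hyC⟩, hinv.2 hyt⟩, hyt⟩
  · rintro ⟨⟨z, ⟨hzs, hzC⟩, rfl⟩, hyt⟩
    exact ⟨by rwa [mem_preimage, hinv.1 hzs], hyt⟩

structure IsRetiming (r : ℝ → ℝ) (s t : Set ℝ) : Prop where
  continuousOn : ContinuousOn r s
  strictMonoOn : StrictMonoOn r s
  bijOn : BijOn r s t

namespace IsRetiming

variable {r r' : ℝ → ℝ} {s t u : Set ℝ}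

theorem comp (h' : IsRetiming r' t u) (h : IsRetiming r s t) : IsRetiming (r' ∘ r) s u :=
  ⟨h'.continuousOn.comp h.continuousOn h.bijOn.mapsTo,
    h'.strictMonoOn.comp h.strictMonoOn h.bijOn.mapsTo, h'.bijOn.comp h.bijOn⟩

theorem invFunOn (h : IsRetiming r s t) (hs : IsCompact s) : IsRetiming (invFunOn r s) t s := by
  have hinv := h.bijOn.invOn_invFunOn
  have hbij := h.bijOn.symm hinv.symm
  refine ⟨h.bijOn.continuousOn_invFunOn hs h.continuousOn, fun y hy y' hy' hlt => ?_, hbij⟩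
  rwa [← h.strictMonoOn.lt_iff_lt (hbij.mapsTo hy) (hbij.mapsTo hy'), hinv.2 hy, hinv.2 hy']

end IsRetiming

theorem isRetiming_lineMap {a b : ℝ} (hab : a < b) :
    IsRetiming (AffineMap.lineMap a b) (Icc 0 1) (Icc a b) := by
  have hmono : StrictMono (AffineMap.lineMap a b : ℝ → ℝ) := fun _ _ =>
    (lineMap_lt_lineMap_iff_of_lt' hab).2
  refine ⟨AffineMap.lineMap_continuous.continuousOn, hmono.strictMonoOn _, ?_⟩
  rw [← segment_eq_Icc hab.le, segment_eq_image_lineMap]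
  exact (hmono.injective.injOn).bijOn_image

section Costs

variable {O : Type*} [NormedAddCommGroup O]

noncomputable def skorokhodCost (x y : ℝ → O) (a b : ℝ) (r : ℝ → ℝ) : ℝ :=
  max (sSup ((fun t => |r t - t|) '' Icc a b)) (sSup ((fun t => ‖x t - y (r t)‖) '' Icc a b))

noncomputable def frechetCost (x y : ℝ → O) (αf αg : ℝ → ℝ) : ℝ :=
  sSup ((fun θ => max ‖x (αf θ) - y (αg θ)‖ |αf θ - αg θ|) '' Icc 0 1)

theorem skorokhodCost_eq_frechetCost {x y : ℝ → O} {a b c d : ℝ} {r αf αg : ℝ → ℝ}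
    (hx : ContinuousOn x (Icc a b)) (hy : ContinuousOn y (Icc c d))
    (hαf : ContinuousOn αf (Icc 0 1)) (hαf_image : αf '' Icc 0 1 = Icc a b)
    (hαg : ContinuousOn αg (Icc 0 1)) (hαg_maps : MapsTo αg (Icc 0 1) (Icc c d))
    (hr : EqOn (r ∘ αf) αg (Icc 0 1)) :
    skorokhodCost x y a b r = frechetCost x y αf αg := by
  have pullback (f : ℝ → ℝ → ℝ) :
      (fun t => f t (r t)) '' Icc a b = (fun θ => f (αf θ) (αg θ)) '' Icc 0 1 := by
    rw [← hαf_image, image_image]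
    exact image_congr fun θ hθ => by rw [← hr hθ, comp_apply]
  have hbdd_value : BddAbove ((fun θ => ‖x (αf θ) - y (αg θ)‖) '' Icc 0 1) :=
    isCompact_Icc.bddAbove_image
      ((hx.comp hαf (hαf_image ▸ mapsTo_image _ _)).sub (hy.comp hαg hαg_maps)).norm
  have hbdd_time : BddAbove ((fun θ => |αf θ - αg θ|) '' Icc 0 1) :=
    isCompact_Icc.bddAbove_image (hαf.sub hαg).abs
  rw [skorokhodCost, frechetCost, pullback (fun t s => |s - t|),
    pullback (fun t s => ‖x t - y s‖), csSup_image_sup hbdd_value hbdd_time, max_comm]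
  simp only [abs_sub_comm]

end Costs

theorem skorokhod_eq_frechet_general {O : Type*} [NormedAddCommGroup O]
    (a b c d : ℝ) (hab : a < b)
    (x y : ℝ → O)
    (hx : ContinuousOn x (Icc a b)) (hy : ContinuousOn y (Icc c d)) :
    sInf {v : ℝ | ∃ r : ℝ → ℝ,
        ContinuousOn r (Icc a b) ∧ StrictMonoOn r (Icc a b) ∧
        Set.BijOn r (Icc a b) (Icc c d) ∧
        v = max (sSup ((fun t => |r t - t|) '' Icc a b))
                (sSup ((fun t => ‖x t - y (r t)‖) '' Icc a b))}
      =
    sInf {v : ℝ | ∃ αf αg : ℝ → ℝ,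
        ContinuousOn αf (Icc 0 1) ∧ StrictMonoOn αf (Icc 0 1) ∧
        Set.BijOn αf (Icc 0 1) (Icc a b) ∧
        ContinuousOn αg (Icc 0 1) ∧ StrictMonoOn αg (Icc 0 1) ∧
        Set.BijOn αg (Icc 0 1) (Icc c d) ∧
        v = sSup ((fun θ =>
              max ‖x (αf θ) - y (αg θ)‖ |αf θ - αg θ|) '' Icc 0 1)} := by
  refine congrArg sInf (Set.ext fun v => ⟨?_, ?_⟩)
  · rintro ⟨r, hrc, hrm, hrb, rfl⟩
    have hαf := isRetiming_lineMap hab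
    have hαg := IsRetiming.comp ⟨hrc, hrm, hrb⟩ hαf
    refine ⟨_, _, hαf.continuousOn, hαf.strictMonoOn, hαf.bijOn, hαg.continuousOn,
      hαg.strictMonoOn, hαg.bijOn, ?_⟩
    exact skorokhodCost_eq_frechetCost hx hy hαf.continuousOn hαf.bijOn.image_eq
      hαg.continuousOn hαg.bijOn.mapsTo fun _ _ => rfl
  · rintro ⟨αf, αg, hfc, hfm, hfb, hgc, hgm, hgb, rfl⟩
    have hαf_inv := IsRetiming.invFunOn ⟨hfc, hfm, hfb⟩ isCompact_Icc
    have hr := IsRetiming.comp ⟨hgc, hgm, hgb⟩ hαf_inv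
    refine ⟨αg ∘ invFunOn αf (Icc 0 1), hr.continuousOn, hr.strictMonoOn, hr.bijOn, ?_⟩
    refine (skorokhodCost_eq_frechetCost hx hy hfc hfb.image_eq hgc hgb.mapsTo ?_).symm
    intro θ hθ
    simp only [comp_apply, hfb.invOn_invFunOn.1 hθ]

/-- The Skorokhod distance between two continuous traces equals the Fréchet distance
between their graph curves `C_x(ρ) = (x ρ, ρ)`, `C_y(ρ) = (y ρ, ρ)` in `O × ℝ` with
the norm `‖(o,t)‖ = max ‖o‖ |t|`. -/
theorem skorokhod_eq_frechet {O : Type*} [NormedAddCommGroup O] [NormedSpace ℝ O]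
    (a b c d : ℝ) (hab : a < b) (hcd : c < d)
    (x y : ℝ → O)
    (hx : ContinuousOn x (Icc a b)) (hy : ContinuousOn y (Icc c d)) :
    sInf {v : ℝ | ∃ r : ℝ → ℝ,
        ContinuousOn r (Icc a b) ∧ StrictMonoOn r (Icc a b) ∧
        Set.BijOn r (Icc a b) (Icc c d) ∧
        v = max (sSup ((fun t => |r t - t|) '' Icc a b))
                (sSup ((fun t => ‖x t - y (r t)‖) '' Icc a b))}
      =
    sInf {v : ℝ | ∃ αf αg : ℝ → ℝ,
        ContinuousOn αf (Icc 0 1) ∧ StrictMonoOn αf (Icc 0 1) ∧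
        Set.BijOn αf (Icc 0 1) (Icc a b) ∧
        ContinuousOn αg (Icc 0 1) ∧ StrictMonoOn αg (Icc 0 1) ∧
        Set.BijOn αg (Icc 0 1) (Icc c d) ∧
        v = sSup ((fun θ =>
              max ‖x (αf θ) - y (αg θ)‖ |αf θ - αg θ|) '' Icc 0 1)} :=
  skorokhod_eq_frechet_general a b c d hab x y hx hy
end

section
/- For polygonal curves f and g (each defined on a nondegenerate interval) into a normed space, the non-bijective Fréchet distance (taken over continuous non-decreasing surjective reparameterizations) equals the Fréchet distance taken over continuous strictly increasing bijective reparameterizations. -/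
/-!
A continuous non-decreasing surjection `α : [0, 1] → [a, b]` is moved a fraction `r ∈ (0, 1]` of
the way towards the linear parameterization `θ ↦ a + θ (b - a)`. The result is strictly
increasing, has the same endpoints, hence is a bijection by the intermediate value theorem, and
lies within `r (b - a)` of `α`. By uniform continuity of `f` and `g` on their compact domains,
the cost of the reparameterization then grows by at most any prescribed `ε`.
-/

open Set AffineMap

theorem csInf_eq_csInf_of_subset_of_forall_exists_le_add {S T : Set ℝ} (hS : BddBelow S)
    (hT : T.Nonempty) (hTS : T ⊆ S) (h : ∀ s ∈ S, ∀ ε > 0, ∃ t ∈ T, t ≤ s + ε) :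
    sInf S = sInf T := by
  refine le_antisymm (csInf_le_csInf hS hT hTS) (le_csInf (hT.mono hTS) fun s hs => ?_)
  refine le_of_forall_pos_le_add fun ε hε => ?_
  obtain ⟨t, ht, hts⟩ := h s hs ε hε
  exact (csInf_le (hS.mono hTS) ht).trans hts

theorem csSup_image_le_csSup_image_add {ι : Type*} {s : Set ι} {φ ψ : ι → ℝ} {ε : ℝ}
    (hs : s.Nonempty) (hψ : BddAbove (ψ '' s)) (h : ∀ i ∈ s, φ i ≤ ψ i + ε) :
    sSup (φ '' s) ≤ sSup (ψ '' s) + ε := by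
  refine csSup_le (hs.image φ) ?_
  rintro _ ⟨i, hi, rfl⟩
  exact (h i hi).trans (add_le_add_left (le_csSup hψ ⟨i, hi, rfl⟩) ε)

theorem MonotoneOn.apply_eq_of_surjOn_Icc {α β : Type*} [PartialOrder α] [PartialOrder β]
    {f : α → β} {c d : α} {a b : β} (hf : MonotoneOn f (Icc c d))
    (hmaps : MapsTo f (Icc c d) (Icc a b)) (hsurj : SurjOn f (Icc c d) (Icc a b)) (hab : a ≤ b) :
    f c = a ∧ f d = b := by
  obtain ⟨t, ht, -⟩ := hsurj (left_mem_Icc.2 hab)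
  have hcd : c ≤ d := ht.1.trans ht.2
  obtain ⟨hca, hbd⟩ := (Icc_subset_Icc_iff hab).1 (hsurj.trans hf.mapsTo_Icc.image_subset)
  exact ⟨hca.antisymm (hmaps (left_mem_Icc.2 hcd)).1, (hmaps (right_mem_Icc.2 hcd)).2.antisymm hbd⟩

theorem StrictMonoOn.bijOn_Icc {α β : Type*} [ConditionallyCompleteLinearOrder α]
    [TopologicalSpace α] [OrderTopology α] [DenselyOrdered α] [LinearOrder β] [TopologicalSpace β]
    [OrderClosedTopology β] {f : α → β} {c d : α} (hf : StrictMonoOn f (Icc c d))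
    (hcont : ContinuousOn f (Icc c d)) (hcd : c ≤ d) :
    BijOn f (Icc c d) (Icc (f c) (f d)) :=
  ⟨hf.monotoneOn.mapsTo_Icc, hf.injOn,
    hcont.surjOn_Icc (left_mem_Icc.2 hcd) (right_mem_Icc.2 hcd)⟩

theorem strictMono_lineMap {a b : ℝ} (hab : a < b) : StrictMono (lineMap a b : ℝ → ℝ) :=
  fun _ _ h => (lineMap_lt_lineMap_iff_of_lt' hab).2 h

theorem bijOn_lineMap_Icc {a b : ℝ} (hab : a < b) :
    BijOn (lineMap a b : ℝ → ℝ) (Icc 0 1) (Icc a b) := by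
  simpa only [lineMap_apply_zero, lineMap_apply_one] using
    ((strictMono_lineMap hab).strictMonoOn _).bijOn_Icc lineMap_continuous.continuousOn zero_le_one

theorem exists_strictMonoOn_bijOn_forall_dist_lt {a b : ℝ} (hab : a < b) {α : ℝ → ℝ}
    (hcont : ContinuousOn α (Icc 0 1)) (hmono : MonotoneOn α (Icc 0 1))
    (hmaps : MapsTo α (Icc 0 1) (Icc a b)) (hsurj : SurjOn α (Icc 0 1) (Icc a b))
    {δ : ℝ} (hδ : 0 < δ) :
    ∃ β : ℝ → ℝ, ContinuousOn β (Icc 0 1) ∧ StrictMonoOn β (Icc 0 1) ∧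
      BijOn β (Icc 0 1) (Icc a b) ∧ ∀ θ ∈ Icc (0 : ℝ) 1, dist (β θ) (α θ) < δ := by
  obtain ⟨hα0, hα1⟩ := hmono.apply_eq_of_surjOn_Icc hmaps hsurj hab.le
  obtain ⟨c, hc, hcδ⟩ := exists_pos_mul_lt hδ (b - a)
  set r : ℝ := min c 1
  have hr : 0 < r := lt_min hc one_pos
  set β : ℝ → ℝ := fun θ => lineMap (α θ) (lineMap a b θ : ℝ) r
  have hβcont : ContinuousOn β (Icc 0 1) := by
    simp only [β, lineMap_apply_module]
    fun_prop
  have hβmono : StrictMonoOn β (Icc 0 1) := fun x hx y hy hxy =>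
    (lineMap_mono_left (hmono hx hy hxy.le) (min_le_right c 1)).trans_lt
      (lineMap_strict_mono_right (strictMono_lineMap hab hxy) hr)
  refine ⟨β, hβcont, hβmono, ?_, fun θ hθ => ?_⟩
  · simpa only [β, hα0, hα1, lineMap_apply_zero, lineMap_apply_one, lineMap_same_apply] using
      hβmono.bijOn_Icc hβcont zero_le_one
  · calc dist (β θ) (α θ) = r * dist (α θ) (lineMap a b θ) := by
          rw [dist_lineMap_left, Real.norm_of_nonneg hr.le]
      _ ≤ c * (b - a) := mul_le_mul (min_le_left c 1)
          (Real.dist_le_of_mem_Icc (hmaps hθ) ((bijOn_lineMap_Icc hab).mapsTo hθ)) dist_nonneg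
          hc.le
      _ < δ := by rwa [mul_comm]

theorem exists_strictMonoOn_bijOn_forall_dist_comp_lt {X : Type*} [PseudoMetricSpace X]
    {a b : ℝ} (hab : a < b) {f : ℝ → X} (hf : ContinuousOn f (Icc a b)) {α : ℝ → ℝ}
    (hcont : ContinuousOn α (Icc 0 1)) (hmono : MonotoneOn α (Icc 0 1))
    (hmaps : MapsTo α (Icc 0 1) (Icc a b)) (hsurj : SurjOn α (Icc 0 1) (Icc a b))
    {ε : ℝ} (hε : 0 < ε) :
    ∃ β : ℝ → ℝ, ContinuousOn β (Icc 0 1) ∧ StrictMonoOn β (Icc 0 1) ∧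
      BijOn β (Icc 0 1) (Icc a b) ∧ ∀ θ ∈ Icc (0 : ℝ) 1, dist (f (β θ)) (f (α θ)) < ε := by
  obtain ⟨δ, hδ, hfδ⟩ := Metric.uniformContinuousOn_iff.1
    (isCompact_Icc.uniformContinuousOn_of_continuous hf) ε hε
  obtain ⟨β, hβcont, hβmono, hβbij, hβα⟩ :=
    exists_strictMonoOn_bijOn_forall_dist_lt hab hcont hmono hmaps hsurj hδ
  exact ⟨β, hβcont, hβmono, hβbij,
    fun θ hθ => hfδ _ (hβbij.mapsTo hθ) _ (hmaps hθ) (hβα θ hθ)⟩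

/-- The non-bijective Fréchet distance (over continuous non-decreasing surjective
reparameterizations) equals the Fréchet distance over continuous strictly increasing
bijective reparameterizations, for curves on nondegenerate intervals. -/
theorem frechet_nonbijective_eq_bijective {V : Type*} [NormedAddCommGroup V]
    (af bf ag bg : ℝ) (h1 : af < bf) (h2 : ag < bg)
    (f g : ℝ → V)
    (hf : ContinuousOn f (Icc af bf)) (hg : ContinuousOn g (Icc ag bg)) :
    sInf {v : ℝ | ∃ αf αg : ℝ → ℝ,
        ContinuousOn αf (Icc 0 1) ∧ MonotoneOn αf (Icc 0 1) ∧
        Set.MapsTo αf (Icc 0 1) (Icc af bf) ∧ Set.SurjOn αf (Icc 0 1) (Icc af bf) ∧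
        ContinuousOn αg (Icc 0 1) ∧ MonotoneOn αg (Icc 0 1) ∧
        Set.MapsTo αg (Icc 0 1) (Icc ag bg) ∧ Set.SurjOn αg (Icc 0 1) (Icc ag bg) ∧
        v = sSup ((fun θ => ‖f (αf θ) - g (αg θ)‖) '' Icc 0 1)}
      =
    sInf {v : ℝ | ∃ αf αg : ℝ → ℝ,
        ContinuousOn αf (Icc 0 1) ∧ StrictMonoOn αf (Icc 0 1) ∧
        Set.BijOn αf (Icc 0 1) (Icc af bf) ∧
        ContinuousOn αg (Icc 0 1) ∧ StrictMonoOn αg (Icc 0 1) ∧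
        Set.BijOn αg (Icc 0 1) (Icc ag bg) ∧
        v = sSup ((fun θ => ‖f (αf θ) - g (αg θ)‖) '' Icc 0 1)} := by
  refine csInf_eq_csInf_of_subset_of_forall_exists_le_add ⟨0, ?_⟩
    ⟨_, lineMap af bf, lineMap ag bg, lineMap_continuous.continuousOn,
      (strictMono_lineMap h1).strictMonoOn _, bijOn_lineMap_Icc h1, lineMap_continuous.continuousOn,
      (strictMono_lineMap h2).strictMonoOn _, bijOn_lineMap_Icc h2, rfl⟩ ?_ ?_
  · rintro _ ⟨-, -, -, -, -, -, -, -, -, -, rfl⟩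
    exact Real.sSup_nonneg (by rintro _ ⟨θ, -, rfl⟩; exact norm_nonneg _)
  · rintro _ ⟨αf, αg, hcf, hsf, hbf, hcg, hsg, hbg, rfl⟩
    exact ⟨αf, αg, hcf, hsf.monotoneOn, hbf.mapsTo, hbf.surjOn,
      hcg, hsg.monotoneOn, hbg.mapsTo, hbg.surjOn, rfl⟩
  rintro _ ⟨αf, αg, hcf, hmf, hmapf, hsurjf, hcg, hmg, hmapg, hsurjg, rfl⟩ ε hε
  obtain ⟨βf, hcβf, hsβf, hbβf, hβf⟩ :=
    exists_strictMonoOn_bijOn_forall_dist_comp_lt h1 hf hcf hmf hmapf hsurjf (half_pos hε)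
  obtain ⟨βg, hcβg, hsβg, hbβg, hβg⟩ :=
    exists_strictMonoOn_bijOn_forall_dist_comp_lt h2 hg hcg hmg hmapg hsurjg (half_pos hε)
  refine ⟨_, ⟨βf, βg, hcβf, hsβf, hbβf, hcβg, hsβg, hbβg, rfl⟩,
    csSup_image_le_csSup_image_add (nonempty_Icc.2 zero_le_one)
      (isCompact_Icc.bddAbove_image ((hf.comp hcf hmapf).sub (hg.comp hcg hmapg)).norm)
      fun θ hθ => ?_⟩
  simp only [← dist_eq_norm]
  calc dist (f (βf θ)) (g (βg θ))
      ≤ dist (f (βf θ)) (f (αf θ)) + dist (f (αf θ)) (g (αg θ)) + dist (g (αg θ)) (g (βg θ)) :=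
        dist_triangle4 _ _ _ _
    _ ≤ dist (f (αf θ)) (g (αg θ)) + ε := by
        linarith [hβf θ hθ, hβg θ hθ, dist_comm (g (αg θ)) (g (βg θ))]
end

section
/- In ℝⁿ with the Euclidean norm, for a point s and distinct points z ≠ z', let l(λ) = z + λ(z'−z) and for δ ≥ dist(s, segment(z,z')) define h(δ) = {λ ∈ [0,1] : ‖l(λ) − s‖ ≤ δ}. Then: (1) h(δ) is a closed interval; (2) h_max(δ) = sup h(δ) is continuous and strictly increasing on [dist(s, segment(z,z')), dist(s,z')], and if h_max(δ) = λ then ‖l(λ) − s‖ = δ; (3) symmetrically, h_min(δ) = inf h(δ) is continuous and strictly decreasing on [dist(s, segment(z,z')), dist(s,z)]. -/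
/-!
Completing the square, `‖l(λ) − s‖² = B (λ − λ_p)² + A` with `B = ‖z' − z‖² > 0`, so
`‖l(λ) − s‖ ≤ δ` iff `|λ − λ_p| ≤ r(δ) := √((δ² − A) / B)`, and
`h(δ) = [max 0 (λ_p − r(δ)), min 1 (λ_p + r(δ))]` with `r` continuous and strictly increasing.
For `δ < dist(s, z')` the cut-off `1` is inactive (otherwise `1 ∈ h(δ)`), so there
`h_max = λ_p + r`; symmetrically `h_min = λ_p − r` for `δ < dist(s, z)`.
-/

open Set Metric

namespace BallSegment

noncomputable def radius (A B δ : ℝ) : ℝ := √((δ ^ 2 - A) / B)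

def sublevel (g : ℝ → ℝ) (δ : ℝ) : Set ℝ := {t | t ∈ Icc 0 1 ∧ g t ≤ δ}

lemma continuous_radius (A B : ℝ) : Continuous (radius A B) := by
  unfold radius
  fun_prop

lemma radius_nonneg (A B δ : ℝ) : 0 ≤ radius A B δ := Real.sqrt_nonneg _

lemma radius_lt_radius {A B x y : ℝ} (hB : 0 < B) (hx : 0 ≤ x) (hA : A ≤ x ^ 2) (hxy : x < y) :
    radius A B x < radius A B y := by
  have hxy2 : x ^ 2 < y ^ 2 := by nlinarith
  exact Real.sqrt_lt_sqrt (div_nonneg (by linarith) hB.le)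
    (div_lt_div_of_pos_right (by linarith) hB)

structure IsSqrtQuadratic (g : ℝ → ℝ) (A B p : ℝ) : Prop where
  nonneg : ∀ t, 0 ≤ g t
  sq_eq : ∀ t, g t ^ 2 = B * (t - p) ^ 2 + A
  pos : 0 < B

namespace IsSqrtQuadratic

variable {g : ℝ → ℝ} {A B p δ t₀ : ℝ}

lemma le_sq_of_le (hq : IsSqrtQuadratic g A B p) (hδ : g t₀ ≤ δ) : A ≤ δ ^ 2 := by
  nlinarith [hq.sq_eq t₀, hq.pos, sq_nonneg (t₀ - p), pow_le_pow_left₀ (hq.nonneg t₀) hδ 2]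

lemma le_iff_abs_sub_le_radius (hq : IsSqrtQuadratic g A B p) (hδ : g t₀ ≤ δ) (t : ℝ) :
    g t ≤ δ ↔ |t - p| ≤ radius A B δ := by
  have hAδ := hq.le_sq_of_le hδ
  rw [radius, Real.le_sqrt (abs_nonneg _) (div_nonneg (by linarith) hq.pos.le), sq_abs,
    le_div_iff₀ hq.pos, ← pow_le_pow_iff_left₀ (hq.nonneg t) ((hq.nonneg t₀).trans hδ)
    two_ne_zero, hq.sq_eq]
  constructor <;> intro <;> linarith

lemma eq_of_abs_sub_eq_radius (hq : IsSqrtQuadratic g A B p) (hδ : g t₀ ≤ δ) {t : ℝ}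
    (ht : |t - p| = radius A B δ) : g t = δ := by
  have hAδ := hq.le_sq_of_le hδ
  have hsq_t : (t - p) ^ 2 = (δ ^ 2 - A) / B := by
    rw [← sq_abs, ht, radius, Real.sq_sqrt (div_nonneg (by linarith) hq.pos.le)]
  rw [← pow_left_inj₀ (hq.nonneg t) ((hq.nonneg t₀).trans hδ) two_ne_zero, hq.sq_eq, hsq_t]
  field_simp [hq.pos.ne']
  ring

lemma sublevel_eq_Icc (hq : IsSqrtQuadratic g A B p) (hδ : g t₀ ≤ δ) :
    sublevel g δ = Icc (max 0 (p - radius A B δ)) (min 1 (p + radius A B δ)) := by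
  ext t
  simp only [sublevel, mem_ofPred_eq, mem_Icc, max_le_iff, le_min_iff,
    hq.le_iff_abs_sub_le_radius hδ t, abs_sub_le_iff]
  constructor <;> rintro ⟨⟨h0, h1⟩, h2, h3⟩ <;> refine ⟨⟨?_, ?_⟩, ?_, ?_⟩ <;> linarith

lemma sub_radius_le_and_le_add_radius (hq : IsSqrtQuadratic g A B p) (hδ : g t₀ ≤ δ) :
    p - radius A B δ ≤ t₀ ∧ t₀ ≤ p + radius A B δ := by
  have h := (hq.le_iff_abs_sub_le_radius hδ t₀).1 hδ
  rw [abs_sub_le_iff] at h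
  constructor <;> linarith

lemma max_le_min (hq : IsSqrtQuadratic g A B p) (ht₀ : t₀ ∈ Icc 0 1) (hδ : g t₀ ≤ δ) :
    max 0 (p - radius A B δ) ≤ min 1 (p + radius A B δ) := by
  have h := hq.sub_radius_le_and_le_add_radius hδ
  exact max_le (le_min zero_le_one (by linarith [ht₀.1]))
    (le_min (by linarith [ht₀.2]) (by linarith))

lemma sSup_sublevel (hq : IsSqrtQuadratic g A B p) (ht₀ : t₀ ∈ Icc 0 1) (hδ : g t₀ ≤ δ) :
    sSup (sublevel g δ) = min 1 (p + radius A B δ) := by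
  rw [hq.sublevel_eq_Icc hδ, csSup_Icc (hq.max_le_min ht₀ hδ)]

lemma sInf_sublevel (hq : IsSqrtQuadratic g A B p) (ht₀ : t₀ ∈ Icc 0 1) (hδ : g t₀ ≤ δ) :
    sInf (sublevel g δ) = max 0 (p - radius A B δ) := by
  rw [hq.sublevel_eq_Icc hδ, csInf_Icc (hq.max_le_min ht₀ hδ)]

lemma add_radius_lt_one (hq : IsSqrtQuadratic g A B p) (ht₀ : t₀ ∈ Icc 0 1) (hδ : g t₀ ≤ δ)
    (hδ₁ : δ < g 1) : p + radius A B δ < 1 := by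
  by_contra! h
  have h₀ := hq.sub_radius_le_and_le_add_radius hδ
  have h₁ : g 1 ≤ δ := (hq.le_iff_abs_sub_le_radius hδ 1).2
    (abs_sub_le_iff.2 ⟨by linarith, by linarith [ht₀.2]⟩)
  linarith

lemma zero_lt_sub_radius (hq : IsSqrtQuadratic g A B p) (ht₀ : t₀ ∈ Icc 0 1) (hδ : g t₀ ≤ δ)
    (hδ₀ : δ < g 0) : 0 < p - radius A B δ := by
  by_contra! h
  have h₀ := hq.sub_radius_le_and_le_add_radius hδ
  have h₁ : g 0 ≤ δ := (hq.le_iff_abs_sub_le_radius hδ 0).2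
    (abs_sub_le_iff.2 ⟨by linarith [ht₀.1], by linarith⟩)
  linarith

lemma continuousOn_sSup_sublevel (hq : IsSqrtQuadratic g A B p) (ht₀ : t₀ ∈ Icc 0 1) :
    ContinuousOn (fun δ ↦ sSup (sublevel g δ)) (Icc (g t₀) (g 1)) :=
  (continuous_const.min (continuous_const.add (continuous_radius A B))).continuousOn.congr
    fun _ hδ ↦ hq.sSup_sublevel ht₀ hδ.1

lemma continuousOn_sInf_sublevel (hq : IsSqrtQuadratic g A B p) (ht₀ : t₀ ∈ Icc 0 1) :
    ContinuousOn (fun δ ↦ sInf (sublevel g δ)) (Icc (g t₀) (g 0)) :=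
  (continuous_const.max (continuous_const.sub (continuous_radius A B))).continuousOn.congr
    fun _ hδ ↦ hq.sInf_sublevel ht₀ hδ.1

lemma strictMonoOn_sSup_sublevel (hq : IsSqrtQuadratic g A B p) (ht₀ : t₀ ∈ Icc 0 1) :
    StrictMonoOn (fun δ ↦ sSup (sublevel g δ)) (Icc (g t₀) (g 1)) := by
  intro x hx y hy hxy
  have hx₁ := hq.add_radius_lt_one ht₀ hx.1 (hxy.trans_le hy.2)
  have hr := radius_lt_radius hq.pos ((hq.nonneg t₀).trans hx.1) (hq.le_sq_of_le hx.1) hxy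
  simp only [hq.sSup_sublevel ht₀ hx.1, hq.sSup_sublevel ht₀ hy.1, min_eq_right hx₁.le]
  exact lt_min hx₁ (by linarith)

lemma strictAntiOn_sInf_sublevel (hq : IsSqrtQuadratic g A B p) (ht₀ : t₀ ∈ Icc 0 1) :
    StrictAntiOn (fun δ ↦ sInf (sublevel g δ)) (Icc (g t₀) (g 0)) := by
  intro x hx y hy hxy
  have hx₀ := hq.zero_lt_sub_radius ht₀ hx.1 (hxy.trans_le hy.2)
  have hr := radius_lt_radius hq.pos ((hq.nonneg t₀).trans hx.1) (hq.le_sq_of_le hx.1) hxy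
  simp only [hq.sInf_sublevel ht₀ hx.1, hq.sInf_sublevel ht₀ hy.1, max_eq_right hx₀.le]
  exact max_lt hx₀ (by linarith)

lemma apply_sSup_sublevel (hq : IsSqrtQuadratic g A B p) (ht₀ : t₀ ∈ Icc 0 1)
    (hδ : δ ∈ Icc (g t₀) (g 1)) : g (sSup (sublevel g δ)) = δ := by
  rw [hq.sSup_sublevel ht₀ hδ.1]
  rcases le_total 1 (p + radius A B δ) with h | h
  · rw [min_eq_left h]
    exact le_antisymm (not_lt.1 fun hlt ↦ (hq.add_radius_lt_one ht₀ hδ.1 hlt).not_ge h) hδ.2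
  · rw [min_eq_right h]
    exact hq.eq_of_abs_sub_eq_radius hδ.1
      (by rw [add_sub_cancel_left, abs_of_nonneg (radius_nonneg A B δ)])

lemma apply_sInf_sublevel (hq : IsSqrtQuadratic g A B p) (ht₀ : t₀ ∈ Icc 0 1)
    (hδ : δ ∈ Icc (g t₀) (g 0)) : g (sInf (sublevel g δ)) = δ := by
  rw [hq.sInf_sublevel ht₀ hδ.1]
  rcases le_total (p - radius A B δ) 0 with h | h
  · rw [max_eq_left h]
    exact le_antisymm (not_lt.1 fun hlt ↦ (hq.zero_lt_sub_radius ht₀ hδ.1 hlt).not_ge h) hδ.2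
  · rw [max_eq_right h]
    exact hq.eq_of_abs_sub_eq_radius hδ.1
      (by rw [sub_sub_cancel_left, abs_neg, abs_of_nonneg (radius_nonneg A B δ)])

end IsSqrtQuadratic

lemma isSqrtQuadratic_norm_add_smul {E : Type*} [NormedAddCommGroup E] [InnerProductSpace ℝ E]
    (u v : E) (hv : v ≠ 0) :
    IsSqrtQuadratic (fun t ↦ ‖u + t • v‖) (‖u‖ ^ 2 - inner ℝ u v ^ 2 / ‖v‖ ^ 2) (‖v‖ ^ 2)
      (-inner ℝ u v / ‖v‖ ^ 2) where
  nonneg _ := norm_nonneg _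
  sq_eq t := by
    have hv' : ‖v‖ ≠ 0 := norm_ne_zero_iff.2 hv
    rw [norm_add_sq_real, real_inner_smul_right, norm_smul, mul_pow, Real.norm_eq_abs, sq_abs]
    field_simp
    ring
  pos := by positivity

lemma exists_norm_add_smul_sub_eq_infDist_segment {E : Type*} [NormedAddCommGroup E]
    [NormedSpace ℝ E] (s z z' : E) :
    ∃ t ∈ Icc (0 : ℝ) 1, ‖z + t • (z' - z) - s‖ = infDist s (segment ℝ z z') := by
  have hcompact : IsCompact (segment ℝ z z') := by
    rw [segment_eq_image']
    exact isCompact_Icc.image (by fun_prop)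
  obtain ⟨y, hy, hdist⟩ := hcompact.exists_infDist_eq_dist ⟨z, left_mem_segment ℝ z z'⟩ s
  rw [segment_eq_image'] at hy
  obtain ⟨t, ht, rfl⟩ := hy
  exact ⟨t, ht, by rw [hdist, dist_eq_norm']⟩

end BallSegment

/-- Properties of the feasible-parameter set `h(δ) = {λ ∈ [0,1] : ‖l(λ) − s‖ ≤ δ}` for a
point `s` and the segment `l(λ) = z + λ(z'−z)` in Euclidean space: it is a closed
interval; its sup is continuous, strictly increasing and attains the boundary value;
symmetrically for its inf. -/
theorem ball_segment_intersection_properties {n : ℕ}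
    (s z z' : EuclideanSpace ℝ (Fin n)) (hzz : z ≠ z') :
    let l : ℝ → EuclideanSpace ℝ (Fin n) := fun lam => z + lam • (z' - z)
    let d0 : ℝ := Metric.infDist s (segment ℝ z z')
    let h : ℝ → Set ℝ := fun δ => {lam | lam ∈ Icc (0:ℝ) 1 ∧ ‖l lam - s‖ ≤ δ}
    let hmax : ℝ → ℝ := fun δ => sSup (h δ)
    let hmin : ℝ → ℝ := fun δ => sInf (h δ)
    (∀ δ : ℝ, d0 ≤ δ → ∃ a b : ℝ, h δ = Icc a b) ∧
    (ContinuousOn hmax (Icc d0 (dist s z')) ∧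
     StrictMonoOn hmax (Icc d0 (dist s z')) ∧
     ∀ δ ∈ Icc d0 (dist s z'), ‖l (hmax δ) - s‖ = δ) ∧
    (ContinuousOn hmin (Icc d0 (dist s z)) ∧
     StrictAntiOn hmin (Icc d0 (dist s z)) ∧
     ∀ δ ∈ Icc d0 (dist s z), ‖l (hmin δ) - s‖ = δ) := by
  intro l d0 h hmax hmin
  have hl : (fun t ↦ ‖(z - s) + t • (z' - z)‖) = fun t ↦ ‖l t - s‖ := by
    funext t
    simp only [l]
    abel_nf
  have hq := BallSegment.isSqrtQuadratic_norm_add_smul (z - s) (z' - z) (sub_ne_zero.2 hzz.symm)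
  rw [hl] at hq
  obtain ⟨t₀, ht₀, hd0⟩ :=
    BallSegment.exists_norm_add_smul_sub_eq_infDist_segment s z z'
  have hd0 : ‖l t₀ - s‖ = d0 := hd0
  have hz : dist s z = ‖l 0 - s‖ := by simp [l, dist_eq_norm']
  have hz' : dist s z' = ‖l 1 - s‖ := by simp [l, dist_eq_norm']
  rw [hz, hz', ← hd0]
  exact ⟨fun δ hδ ↦ ⟨_, _, hq.sublevel_eq_Icc hδ⟩,
    ⟨hq.continuousOn_sSup_sublevel ht₀, hq.strictMonoOn_sSup_sublevel ht₀,
      fun _ hδ ↦ hq.apply_sSup_sublevel ht₀ hδ⟩,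
    ⟨hq.continuousOn_sInf_sublevel ht₀, hq.strictAntiOn_sInf_sublevel ht₀,
      fun _ hδ ↦ hq.apply_sInf_sublevel ht₀ hδ⟩⟩
end

section
/- Let s₁, s₂, z, z' be points in ℝⁿ with the Euclidean norm, and let δ* = min{δ ≥ 0 : B(s₁,δ) ∩ B(s₂,δ) ∩ segment(z,z') ≠ ∅}. If δ* is neither equal to dist(s₁, segment(z,z')) nor to dist(s₂, segment(z,z')), then δ* = min{δ ≥ 0 : Sphere(s₁,δ) ∩ Sphere(s₂,δ) ∩ segment(z,z') ≠ ∅} (this latter minimum exists), and for δ = δ* the intersection Sphere(s₁,δ*) ∩ Sphere(s₂,δ*) ∩ segment(z,z') contains exactly one point. -/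
/-!
Let `F u = max (dist u s₁) (dist u s₂)`, so `δ*` is the minimum of `F` on the segment `S`,
attained at some `x`. If `dist x s₁ < δ*`, move from `x` a little towards a point of `S`
strictly closer to `s₂` than `δ*` (one exists since `infDist s₂ S ≠ δ*`): by convexity of both
distance functions, `F` drops below `δ*`. Hence `x` lies on both spheres. Two distinct such points
are impossible, since by strict convexity of Euclidean balls their midpoint would again have
`F < δ*`.
-/

open Set Metric Filter Topology

theorem ConvexOn.exists_lt_lt {E : Type*} [AddCommGroup E] [Module ℝ E] {S : Set E}
    {f g : E → ℝ} (hf : ConvexOn ℝ S f) (hg : ConvexOn ℝ S g) {x y : E} (hx : x ∈ S)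
    (hy : y ∈ S) {c : ℝ} (hfx : f x < c) (hgx : g x ≤ c) (hgy : g y < c) :
    ∃ u ∈ S, f u < c ∧ g u < c := by
  have hcont : Tendsto (fun t : ℝ => (1 - t) * f x + t * f y) (𝓝 0) (𝓝 (f x)) := by
    simpa using (by fun_prop : Continuous fun t : ℝ => (1 - t) * f x + t * f y).tendsto 0
  obtain ⟨t, ⟨hfxy, ht1⟩, ht0⟩ : ∃ t : ℝ, ((1 - t) * f x + t * f y < c ∧ t < 1) ∧ 0 < t :=
    ((eventually_nhdsWithin_of_eventually_nhds
      ((hcont.eventually (gt_mem_nhds hfx)).and (gt_mem_nhds one_pos))).and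
        (self_mem_nhdsWithin (s := Ioi 0))).exists
  refine ⟨(1 - t) • x + t • y, hf.1 hx hy (by linarith) ht0.le (by ring), ?_, ?_⟩
  · exact (hf.2 hx hy (by linarith) ht0.le (by ring)).trans_lt hfxy
  · calc g ((1 - t) • x + t • y) ≤ (1 - t) * g x + t * g y :=
          hg.2 hx hy (by linarith) ht0.le (by ring)
      _ < (1 - t) * c + t * c :=
          add_lt_add_of_le_of_lt (mul_le_mul_of_nonneg_left hgx (by linarith))
            (mul_lt_mul_of_pos_left hgy ht0)
      _ = c := by ring

theorem le_max_dist_of_mem_lowerBounds {X : Type*} [PseudoMetricSpace X] {s₁ s₂ : X}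
    {S : Set X} {δ : ℝ}
    (hlb : δ ∈ lowerBounds {d : ℝ | 0 ≤ d ∧ (closedBall s₁ d ∩ closedBall s₂ d ∩ S).Nonempty})
    {u : X} (hu : u ∈ S) : δ ≤ max (dist u s₁) (dist u s₂) :=
  hlb ⟨dist_nonneg.trans (le_max_left _ _), u,
    ⟨mem_closedBall.2 (le_max_left _ _), mem_closedBall.2 (le_max_right _ _)⟩, hu⟩

section MaxDist

variable {E : Type*} [NormedAddCommGroup E] [NormedSpace ℝ E] {s₁ s₂ x : E} {S : Set E}
  {δ : ℝ}

theorem dist_eq_of_forall_le_max_dist (hS : Convex ℝ S)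
    (hmin : ∀ u ∈ S, δ ≤ max (dist u s₁) (dist u s₂)) (hxS : x ∈ S) (hx₁ : dist x s₁ ≤ δ)
    (hx₂ : dist x s₂ ≤ δ) (hinf : δ ≠ infDist s₂ S) : dist x s₁ = δ := by
  by_contra hne
  have hinf_lt : infDist s₂ S < δ :=
    ((infDist_le_dist_of_mem hxS).trans ((dist_comm s₂ x).trans_le hx₂)).lt_of_ne' hinf
  obtain ⟨y, hyS, hy⟩ := (infDist_lt_iff ⟨x, hxS⟩).1 hinf_lt
  obtain ⟨u, huS, hu₁, hu₂⟩ := (convexOn_dist s₁ hS).exists_lt_lt (convexOn_dist s₂ hS) hxS hyS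
    (hx₁.lt_of_ne hne) hx₂ (by rwa [dist_comm])
  exact (hmin u huS).not_gt (max_lt hu₁ hu₂)

theorem eq_of_mem_sphere_inter_sphere [StrictConvexSpace ℝ E] (hS : Convex ℝ S)
    (hmin : ∀ u ∈ S, δ ≤ max (dist u s₁) (dist u s₂)) {w : E}
    (hw : w ∈ sphere s₁ δ ∩ sphere s₂ δ ∩ S) (hx : x ∈ sphere s₁ δ ∩ sphere s₂ δ ∩ S) :
    w = x := by
  by_contra hne
  have hmid₁ := combo_mem_ball_of_ne (sphere_subset_closedBall hw.1.1)
    (sphere_subset_closedBall hx.1.1) hne one_half_pos one_half_pos (add_halves 1)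
  have hmid₂ := combo_mem_ball_of_ne (sphere_subset_closedBall hw.1.2)
    (sphere_subset_closedBall hx.1.2) hne one_half_pos one_half_pos (add_halves 1)
  exact (hmin _ (hS hw.2 hx.2 one_half_pos.le one_half_pos.le (add_halves 1))).not_gt
    (max_lt (mem_ball.1 hmid₁) (mem_ball.1 hmid₂))

end MaxDist

/-- If the least `δ` making the two closed Euclidean balls meet the segment is neither
`dist(s₁, segment)` nor `dist(s₂, segment)`, then it coincides with the least `δ` making
the two *spheres* meet the segment, and for this `δ` the sphere–sphere–segment
intersection is a single point. -/
theorem balls_to_spheres_least_delta {n : ℕ}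
    (s1 s2 z z' : EuclideanSpace ℝ (Fin n)) (δstar : ℝ)
    (hstar : IsLeast {δ : ℝ | 0 ≤ δ ∧
      (Metric.closedBall s1 δ ∩ Metric.closedBall s2 δ ∩ segment ℝ z z').Nonempty} δstar)
    (hne1 : δstar ≠ Metric.infDist s1 (segment ℝ z z'))
    (hne2 : δstar ≠ Metric.infDist s2 (segment ℝ z z')) :
    IsLeast {δ : ℝ | 0 ≤ δ ∧
        (Metric.sphere s1 δ ∩ Metric.sphere s2 δ ∩ segment ℝ z z').Nonempty} δstar ∧
    (∃! w : EuclideanSpace ℝ (Fin n),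
        w ∈ Metric.sphere s1 δstar ∩ Metric.sphere s2 δstar ∩ segment ℝ z z') := by
  obtain ⟨⟨hδ0, x, ⟨hx₁, hx₂⟩, hxS⟩, hlb⟩ := hstar
  have hS := convex_segment (𝕜 := ℝ) z z'
  have hmin := fun u => le_max_dist_of_mem_lowerBounds (u := u) hlb
  have hmin' : ∀ u ∈ segment ℝ z z', δstar ≤ max (dist u s2) (dist u s1) := by
    simpa only [max_comm] using hmin
  have hx : x ∈ sphere s1 δstar ∩ sphere s2 δstar ∩ segment ℝ z z' :=
    ⟨⟨dist_eq_of_forall_le_max_dist hS hmin hxS hx₁ hx₂ hne2,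
      dist_eq_of_forall_le_max_dist hS hmin' hxS hx₂ hx₁ hne1⟩, hxS⟩
  refine ⟨⟨⟨hδ0, x, hx⟩, lowerBounds_mono_set ?_ hlb⟩,
    x, hx, fun w hw => eq_of_mem_sphere_inter_sphere hS hmin hw hx⟩
  rintro δ ⟨hδ, w, ⟨hw₁, hw₂⟩, hwS⟩
  exact ⟨hδ, w, ⟨sphere_subset_closedBall hw₁, sphere_subset_closedBall hw₂⟩, hwS⟩
end

section
/- Helly's theorem in dimension one applied to intervals: let I₁, I₂, I₃, I₄ be closed intervals in ℝ such that every pairwise intersection I_i ∩ I_j (i ≠ j) is nonempty. Then I₁ ∩ I₂ ∩ I₃ ∩ I₄ is nonempty. Consequently, for the L₂-Skorokhod norm on ℝⁿ × ℝ, the least δ such that B((s₁,t₁),δ) ∩ B((s₂,t₂),δ) ∩ segment((z,t_z),(z',t_{z'})) ≠ ∅ equals the maximum over the six pairwise constraints of the corresponding least pairwise δ values. -/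
/-!
Pairwise intersecting closed intervals have a common point, because every left endpoint lies
below every right endpoint. Each constraint is a convex continuous function of the segment
parameter, so at any level `r` its feasible parameters form a closed subinterval of `[0, 1]`.
At `r` equal to the largest pairwise optimum these four intervals meet pairwise, hence all four
meet, and the joint optimum is at most `r`; the reverse inequality holds because a parameter
feasible for all four constraints is feasible for each pair.
-/

open Set

theorem helly_four_Icc (a1 b1 a2 b2 a3 b3 a4 b4 : ℝ)
    (h12 : (Icc a1 b1 ∩ Icc a2 b2).Nonempty) (h13 : (Icc a1 b1 ∩ Icc a3 b3).Nonempty)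
    (h14 : (Icc a1 b1 ∩ Icc a4 b4).Nonempty) (h23 : (Icc a2 b2 ∩ Icc a3 b3).Nonempty)
    (h24 : (Icc a2 b2 ∩ Icc a4 b4).Nonempty) (h34 : (Icc a3 b3 ∩ Icc a4 b4).Nonempty) :
    (Icc a1 b1 ∩ Icc a2 b2 ∩ Icc a3 b3 ∩ Icc a4 b4).Nonempty := by
  simp only [Icc_inter_Icc, nonempty_Icc, sup_le_iff, le_inf_iff] at *
  tauto

theorem exists_eq_Icc_of_isCompact_of_convex {S : Set ℝ} (hc : IsCompact S) (hv : Convex ℝ S)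
    (hne : S.Nonempty) : ∃ a b, S = Icc a b :=
  ⟨_, _, eq_Icc_of_connected_compact ⟨hne, hv.isPreconnected⟩ hc⟩

theorem helly_four_of_isCompact_of_convex {S1 S2 S3 S4 : Set ℝ}
    (hc1 : IsCompact S1) (hc2 : IsCompact S2) (hc3 : IsCompact S3) (hc4 : IsCompact S4)
    (hv1 : Convex ℝ S1) (hv2 : Convex ℝ S2) (hv3 : Convex ℝ S3) (hv4 : Convex ℝ S4)
    (h12 : (S1 ∩ S2).Nonempty) (h13 : (S1 ∩ S3).Nonempty) (h14 : (S1 ∩ S4).Nonempty)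
    (h23 : (S2 ∩ S3).Nonempty) (h24 : (S2 ∩ S4).Nonempty) (h34 : (S3 ∩ S4).Nonempty) :
    (S1 ∩ S2 ∩ S3 ∩ S4).Nonempty := by
  obtain ⟨a1, b1, rfl⟩ := exists_eq_Icc_of_isCompact_of_convex hc1 hv1 h12.left
  obtain ⟨a2, b2, rfl⟩ := exists_eq_Icc_of_isCompact_of_convex hc2 hv2 h12.right
  obtain ⟨a3, b3, rfl⟩ := exists_eq_Icc_of_isCompact_of_convex hc3 hv3 h13.right
  obtain ⟨a4, b4, rfl⟩ := exists_eq_Icc_of_isCompact_of_convex hc4 hv4 h14.right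
  exact helly_four_Icc a1 b1 a2 b2 a3 b3 a4 b4 h12 h13 h14 h23 h24 h34

theorem IsCompact.sep_le {X : Type*} [TopologicalSpace X] [T2Space X] {K : Set X}
    (hK : IsCompact K) {f : X → ℝ} (hf : ContinuousOn f K) (r : ℝ) :
    IsCompact {x ∈ K | f x ≤ r} :=
  hK.of_isClosed_subset (hf.preimage_isClosed_of_isClosed hK.isClosed isClosed_Iic)
    inter_subset_left

theorem csInf_mem_levels {X : Type*} [TopologicalSpace X] {K : Set X} (hK : IsCompact K)
    (hne : K.Nonempty) {g : X → ℝ} (hg : ContinuousOn g K) :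
    sInf {δ : ℝ | 0 ≤ δ ∧ ∃ x ∈ K, g x ≤ δ} ∈ {δ : ℝ | 0 ≤ δ ∧ ∃ x ∈ K, g x ≤ δ} := by
  obtain ⟨x₀, hx₀, hmin⟩ := hK.exists_isMinOn hne hg
  have hlevels : {δ : ℝ | 0 ≤ δ ∧ ∃ x ∈ K, g x ≤ δ} = Ici (max (g x₀) 0) := by
    ext δ
    simp only [mem_ofPred_eq, mem_Ici, max_le_iff]
    exact ⟨fun ⟨hδ, x, hx, hgx⟩ => ⟨(hmin hx).trans hgx, hδ⟩,
      fun ⟨hgx₀, hδ⟩ => ⟨hδ, x₀, hx₀, hgx₀⟩⟩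
  rw [hlevels, csInf_Ici]
  exact self_mem_Ici

noncomputable def pairLevel (K : Set ℝ) (f g : ℝ → ℝ) : ℝ :=
  sInf {δ : ℝ | 0 ≤ δ ∧ ∃ x ∈ K, f x ≤ δ ∧ g x ≤ δ}

section pairLevel

variable {K : Set ℝ} {f g : ℝ → ℝ}

theorem pairLevel_mem (hK : IsCompact K) (hne : K.Nonempty) (hf : ContinuousOn f K)
    (hg : ContinuousOn g K) :
    pairLevel K f g ∈ {δ : ℝ | 0 ≤ δ ∧ ∃ x ∈ K, f x ≤ δ ∧ g x ≤ δ} := by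
  simpa only [pairLevel, sup_le_iff] using csInf_mem_levels hK hne (hf.sup hg)

theorem sep_le_inter_nonempty_of_pairLevel_le (hK : IsCompact K) (hne : K.Nonempty)
    (hf : ContinuousOn f K) (hg : ContinuousOn g K) {r : ℝ} (hr : pairLevel K f g ≤ r) :
    ({x ∈ K | f x ≤ r} ∩ {x ∈ K | g x ≤ r}).Nonempty :=
  have ⟨_, x, hx, hfx, hgx⟩ := pairLevel_mem hK hne hf hg
  ⟨x, ⟨hx, hfx.trans hr⟩, hx, hgx.trans hr⟩

end pairLevel

theorem sInf_levels_four_eq_max_pairLevel {K : Set ℝ} (hK : IsCompact K) (hne : K.Nonempty)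
    {f1 f2 f3 f4 : ℝ → ℝ}
    (hv1 : ConvexOn ℝ K f1) (hv2 : ConvexOn ℝ K f2) (hv3 : ConvexOn ℝ K f3) (hv4 : ConvexOn ℝ K f4)
    (hc1 : ContinuousOn f1 K) (hc2 : ContinuousOn f2 K) (hc3 : ContinuousOn f3 K)
    (hc4 : ContinuousOn f4 K) :
    sInf {δ : ℝ | 0 ≤ δ ∧ ∃ x ∈ K, f1 x ≤ δ ∧ f2 x ≤ δ ∧ f3 x ≤ δ ∧ f4 x ≤ δ}
      = max (max (max (pairLevel K f1 f2) (pairLevel K f1 f3))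
                 (max (pairLevel K f1 f4) (pairLevel K f2 f3)))
            (max (pairLevel K f2 f4) (pairLevel K f3 f4)) := by
  set R := max (max (max (pairLevel K f1 f2) (pairLevel K f1 f3))
    (max (pairLevel K f1 f4) (pairLevel K f2 f3))) (max (pairLevel K f2 f4) (pairLevel K f3 f4))
  apply le_antisymm
  · obtain ⟨x, ⟨⟨⟨hx, h1⟩, -, h2⟩, -, h3⟩, -, h4⟩ := helly_four_of_isCompact_of_convex
      (hK.sep_le hc1 R) (hK.sep_le hc2 R) (hK.sep_le hc3 R) (hK.sep_le hc4 R)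
      (hv1.convex_le R) (hv2.convex_le R) (hv3.convex_le R) (hv4.convex_le R)
      (sep_le_inter_nonempty_of_pairLevel_le hK hne hc1 hc2 (by simp [R]))
      (sep_le_inter_nonempty_of_pairLevel_le hK hne hc1 hc3 (by simp [R]))
      (sep_le_inter_nonempty_of_pairLevel_le hK hne hc1 hc4 (by simp [R]))
      (sep_le_inter_nonempty_of_pairLevel_le hK hne hc2 hc3 (by simp [R]))
      (sep_le_inter_nonempty_of_pairLevel_le hK hne hc2 hc4 (by simp [R]))
      (sep_le_inter_nonempty_of_pairLevel_le hK hne hc3 hc4 (by simp [R]))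
    have hR : 0 ≤ R := (pairLevel_mem hK hne hc1 hc2).1.trans (by simp [R])
    exact csInf_le ⟨0, fun _ hδ => hδ.1⟩ ⟨hR, x, hx, h1, h2, h3, h4⟩
  · have hmem := csInf_mem_levels hK hne (hc1.sup (hc2.sup (hc3.sup hc4)))
    simp only [sup_le_iff] at hmem
    obtain ⟨h0, x, hx, h1, h2, h3, h4⟩ := hmem
    refine max_le (max_le (max_le ?_ ?_) (max_le ?_ ?_)) (max_le ?_ ?_) <;>
      exact csInf_le ⟨0, fun _ hδ => hδ.1⟩ ⟨h0, x, hx, ‹_›, ‹_›⟩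

theorem convexOn_norm_add_smul_sub {E : Type*} [NormedAddCommGroup E] [NormedSpace ℝ E]
    (p q s : E) : ConvexOn ℝ univ fun t : ℝ => ‖p + t • (q - p) - s‖ := by
  have hline : (fun t : ℝ => ‖p + t • (q - p) - s‖)
      = norm ∘ AffineMap.lineMap (k := ℝ) (p - s) (q - s) := by
    funext t
    simp only [Function.comp_apply, AffineMap.lineMap_apply_module']
    congr 1
    module
  rw [hline]
  exact (convexOn_norm convex_univ).comp_affineMap _

/-- Helly's theorem in dimension one for four closed intervals, together with its
consequence for the `L₂`-Skorokhod norm on `ℝⁿ × ℝ`: the least `δ` making the two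
max-norm balls meet the segment equals the maximum of the six pairwise least `δ`s. -/
theorem helly_dim_one_and_skorokhod_pairwise :
    (∀ a1 b1 a2 b2 a3 b3 a4 b4 : ℝ,
      (Icc a1 b1 ∩ Icc a2 b2).Nonempty →
      (Icc a1 b1 ∩ Icc a3 b3).Nonempty →
      (Icc a1 b1 ∩ Icc a4 b4).Nonempty →
      (Icc a2 b2 ∩ Icc a3 b3).Nonempty →
      (Icc a2 b2 ∩ Icc a4 b4).Nonempty →
      (Icc a3 b3 ∩ Icc a4 b4).Nonempty →
      (Icc a1 b1 ∩ Icc a2 b2 ∩ Icc a3 b3 ∩ Icc a4 b4).Nonempty) ∧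
    (∀ (n : ℕ) (s1 s2 z z' : EuclideanSpace ℝ (Fin n)) (t1 t2 tz tz' : ℝ),
      let C1 : ℝ → ℝ := fun lam => ‖z + lam • (z' - z) - s1‖
      let C2 : ℝ → ℝ := fun lam => |tz + lam * (tz' - tz) - t1|
      let C3 : ℝ → ℝ := fun lam => ‖z + lam • (z' - z) - s2‖
      let C4 : ℝ → ℝ := fun lam => |tz + lam * (tz' - tz) - t2|
      let pairδ : (ℝ → ℝ) → (ℝ → ℝ) → ℝ := fun Ci Cj =>
        sInf {δ : ℝ | 0 ≤ δ ∧ ∃ lam ∈ Icc (0:ℝ) 1, Ci lam ≤ δ ∧ Cj lam ≤ δ}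
      sInf {δ : ℝ | 0 ≤ δ ∧ ∃ lam ∈ Icc (0:ℝ) 1,
          C1 lam ≤ δ ∧ C2 lam ≤ δ ∧ C3 lam ≤ δ ∧ C4 lam ≤ δ}
        = max (max (max (pairδ C1 C2) (pairδ C1 C3))
                   (max (pairδ C1 C4) (pairδ C2 C3)))
              (max (pairδ C2 C4) (pairδ C3 C4))) := by
  refine ⟨helly_four_Icc, fun n s1 s2 z z' t1 t2 tz tz' => ?_⟩
  have hv {E : Type} [NormedAddCommGroup E] [NormedSpace ℝ E] (p q s : E) :
      ConvexOn ℝ (Icc 0 1) fun t : ℝ => ‖p + t • (q - p) - s‖ :=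
    (convexOn_norm_add_smul_sub p q s).subset (subset_univ _) (convex_Icc 0 1)
  have hc {E : Type} [NormedAddCommGroup E] [NormedSpace ℝ E] (p q s : E) :
      ContinuousOn (fun t : ℝ => ‖p + t • (q - p) - s‖) (Icc 0 1) := by
    fun_prop
  -- On `ℝ`, `‖x‖` is `|x|` and `t • x` is `t * x` by definition.
  exact sInf_levels_four_eq_max_pairLevel isCompact_Icc (nonempty_Icc.2 zero_le_one)
    (hv z z' s1) (hv tz tz' t1) (hv z z' s2) (hv tz tz' t2)
    (hc z z' s1) (hc tz tz' t1) (hc z z' s2) (hc tz tz' t2)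
end
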